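/- arXiv:2605.00660 — 5 statements merged into one kernel-verified Lean document; each statement's English description precedes it below -/
import Mathlib

section
/- Let X be a finite set, A : X → X a permutation that is a single cycle of length |X|, and φ : X → ZZ/m. Define F : X × ZZ/m → X × ZZ/m by F(x,y) = (A(x), y + φ(x)), and let S = Σ_{x∈X} φ(x) in ZZ/m. Then F is a single cycle of length |X|·m if and only if gcd of (a lift of) S and m equals 1. -/
/-!
Iterating `F` for `k` steps adds the Birkhoff sum `φ x + φ (A x) + ⋯ + φ (A^[k-1] x)` to the
second coordinate. Since `A` is one cycle of length `n = |X|`, the first coordinate returns to `x`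
exactly when `n ∣ k`, and `n q` steps add `q • S`. Hence the fibre over `x` is swept out by
translations by the multiples of `S`, which exhaust `ZMod m` iff `S` is a unit.
-/

open Function

def skewProduct {X G : Type*} [Add G] (A : X → X) (φ : X → G) : X × G → X × G :=
  fun p => (A p.1, p.2 + φ p.1)

theorem iterate_skewProduct {X G : Type*} [AddCommMonoid G] (A : X → X) (φ : X → G) (k : ℕ)
    (x : X) (y : G) : (skewProduct A φ)^[k] (x, y) = (A^[k] x, y + birkhoffSum A φ k x) := by
  induction k with
  | zero => simp
  | succ k ih =>
    rw [iterate_succ_apply', ih, birkhoffSum_succ, ← add_assoc, iterate_succ_apply']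
    rfl

theorem Function.IsPeriodicPt.birkhoffSum_mul {α M : Type*} [AddCommMonoid M] {f : α → α}
    {n : ℕ} {x : α} (h : IsPeriodicPt f n x) (g : α → M) (q : ℕ) :
    birkhoffSum f g (n * q) x = q • birkhoffSum f g n x := by
  induction q with
  | zero => simp
  | succ q ih => rw [Nat.mul_succ, birkhoffSum_add, ih, (h.mul_const q).eq, succ_nsmul]

section Transitive

variable {X : Type*} {A : X → X}

theorem minimalPeriod_pos_of_forall_exists_iterate (hA : ∀ x y : X, ∃ k : ℕ, A^[k] x = y)
    (x : X) : 0 < minimalPeriod A x := by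
  obtain ⟨k, hk⟩ := hA (A x) x
  exact IsPeriodicPt.minimalPeriod_pos k.succ_pos (by rwa [IsPeriodicPt, IsFixedPt, iterate_succ_apply])

theorem bijOn_iterate_range_minimalPeriod (hA : ∀ x y : X, ∃ k : ℕ, A^[k] x = y) (x : X) :
    Set.BijOn (A^[·] x) (Finset.range (minimalPeriod A x)) Set.univ := by
  refine ⟨Set.mapsTo_univ _ _, ?_, fun y _ => ?_⟩
  · simpa using iterate_injOn_Iio_minimalPeriod
  · obtain ⟨k, rfl⟩ := hA x y
    exact ⟨k % minimalPeriod A x,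
      by simpa using Nat.mod_lt _ (minimalPeriod_pos_of_forall_exists_iterate hA x),
      iterate_mod_minimalPeriod_eq⟩

variable [Fintype X]

theorem minimalPeriod_eq_card_of_forall_exists_iterate
    (hA : ∀ x y : X, ∃ k : ℕ, A^[k] x = y) (x : X) : minimalPeriod A x = Fintype.card X := by
  have h := bijOn_iterate_range_minimalPeriod hA x
  simpa using Finset.card_nbij (t := Finset.univ) _ (by simp) h.injOn
    (by simpa using h.surjOn)

theorem birkhoffSum_minimalPeriod_eq_sum {M : Type*} [AddCommMonoid M]
    (hA : ∀ x y : X, ∃ k : ℕ, A^[k] x = y) (φ : X → M) (x : X) :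
    birkhoffSum A φ (minimalPeriod A x) x = ∑ z, φ z := by
  have h := bijOn_iterate_range_minimalPeriod hA x
  exact Finset.sum_nbij _ (by simp) h.injOn (by simpa using h.surjOn) (fun _ _ => rfl)

theorem iterate_skewProduct_card_mul {G : Type*} [AddCommMonoid G]
    (hA : ∀ x y : X, ∃ k : ℕ, A^[k] x = y) (φ : X → G) (q : ℕ) (x : X) (y : G) :
    (skewProduct A φ)^[Fintype.card X * q] (x, y) = (x, y + q • ∑ z, φ z) := by
  have hx := isPeriodicPt_minimalPeriod A x
  rw [iterate_skewProduct, ← minimalPeriod_eq_card_of_forall_exists_iterate hA x,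
    hx.birkhoffSum_mul, birkhoffSum_minimalPeriod_eq_sum hA, (hx.mul_const q).eq]

end Transitive

theorem ZMod.exists_nsmul_eq_of_isUnit {m : ℕ} [NeZero m] {s : ZMod m} (hs : IsUnit s)
    (d : ZMod m) : ∃ t : ℕ, t • s = d := by
  obtain ⟨b, hb⟩ := hs.exists_left_inv
  exact ⟨(d * b).val, by rw [nsmul_eq_mul, ZMod.natCast_zmod_val, mul_assoc, hb, mul_one]⟩

theorem stmt0 {X : Type*} [Fintype X] [Nonempty X] {m : ℕ} [NeZero m]
    (A : X → X) (hA : ∀ x y : X, ∃ k : ℕ, A^[k] x = y) (φ : X → ZMod m) :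
    (∀ p q : X × ZMod m,
        ∃ k : ℕ, (fun pr : X × ZMod m => (A pr.1, pr.2 + φ pr.1))^[k] p = q) ↔
      Nat.gcd (∑ x : X, φ x).val m = 1 := by
  change (∀ p q, ∃ k, (skewProduct A φ)^[k] p = q) ↔ _
  rw [← Nat.coprime_iff_gcd_eq_one, ← ZMod.isUnit_iff_coprime, ZMod.natCast_zmod_val]
  constructor
  · intro h
    obtain ⟨x⟩ := ‹Nonempty X›
    obtain ⟨k, hk⟩ := h (x, 0) (x, 1)
    have hret : A^[k] x = x := by
      simpa [iterate_skewProduct] using congrArg Prod.fst hk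
    obtain ⟨q, rfl⟩ : Fintype.card X ∣ k :=
      minimalPeriod_eq_card_of_forall_exists_iterate hA x ▸ IsPeriodicPt.minimalPeriod_dvd hret
    rw [iterate_skewProduct_card_mul hA, Prod.mk.injEq, zero_add, nsmul_eq_mul] at hk
    exact IsUnit.of_mul_eq_one_right _ hk.2
  · rintro hS ⟨x, y⟩ ⟨x', y'⟩
    obtain ⟨k, rfl⟩ := hA x x'
    obtain ⟨t, ht⟩ := ZMod.exists_nsmul_eq_of_isUnit hS (y' - y - birkhoffSum A φ k x)
    refine ⟨k + Fintype.card X * t, ?_⟩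
    rw [iterate_add_apply, iterate_skewProduct_card_mul hA, iterate_skewProduct, ht]
    congr 1
    abel
end

section
/- For any m ≥ 2 and threshold τ ∈ ZZ/m, the map M_τ^Δ : (ZZ/m)^6 → (ZZ/m)^6 defined by M_τ^Δ(z) = z − p_{ρ_τ(z)} is a bijection, where ρ_τ(z) is the least index i ∈ {1,…,6} with z_i = τ, or 6 if none exists, and p_r has its first r coordinates equal to 1 and the rest 0. Its inverse is y ↦ y + p_{ρ_{τ−1}(y)}. -/
/-- `p_r ∈ (ℤ/m)^6` has its first `r` coordinates equal to `1` and the rest `0`. -/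
def pvec (m : ℕ) (r : ℕ) : Fin 6 → ZMod m := fun j => if (j : ℕ) < r then 1 else 0

/-- `ρ_τ(z)`: the least index `i ∈ {1,…,6}` with `z_i = τ`, or `6` if none exists.
(`Fin 6` index `i₀` corresponds to the coordinate `i₀ + 1`.) -/
def rho {m : ℕ} (τ : ZMod m) (z : Fin 6 → ZMod m) : ℕ :=
  if h : (Finset.univ.filter fun i : Fin 6 => z i = τ).Nonempty
  then ((Finset.univ.filter fun i : Fin 6 => z i = τ).min' h : Fin 6).val + 1
  else 6

/-- `M_τ^Δ(z) = z − p_{ρ_τ(z)}`. -/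
def Mdelta {m : ℕ} (τ : ZMod m) (z : Fin 6 → ZMod m) : Fin 6 → ZMod m :=
  z - pvec m (rho τ z)

/-- `M_τ^a(z) = z − p_a` if `ρ_τ(z) < a`, and `z − p_{a−1}` if `ρ_τ(z) ≥ a`. -/
def Mnum {m : ℕ} (τ : ZMod m) (a : ℕ) (z : Fin 6 → ZMod m) : Fin 6 → ZMod m :=
  if rho τ z < a then z - pvec m a else z - pvec m (a - 1)

/-!
The index `ρ_τ(z)` only depends on the coordinates `z_i` with `i < ρ_τ(z)`, and on exactly those
coordinates `z ↦ z - p_{ρ_τ(z)}` subtracts `1`. Hence a coordinate of `z` before the cut equals `τ`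
iff the same coordinate of `M_τ^Δ(z)` equals `τ - 1`, so `ρ_{τ-1}(M_τ^Δ z) = ρ_τ(z)`, and
symmetrically `ρ_τ(y + p_{ρ_{τ-1}(y)}) = ρ_{τ-1}(y)`. Adding back the same `p_r` inverts the map.
-/

section Rho

variable {m : ℕ} {τ τ' : ZMod m} {z w : Fin 6 → ZMod m}

lemma rho_le_six : rho τ z ≤ 6 := by
  unfold rho
  split_ifs
  · omega
  · rfl

lemma rho_le_of_eq {i : Fin 6} (hi : z i = τ) : rho τ z ≤ i + 1 := by
  have hS : (Finset.univ.filter fun i : Fin 6 => z i = τ).Nonempty := ⟨i, by simp [hi]⟩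
  rw [rho, dif_pos hS, add_le_add_iff_right, Fin.val_fin_le]
  exact Finset.min'_le _ _ (by simp [hi])

lemma rho_eq_six_or_exists : rho τ z = 6 ∨ ∃ i : Fin 6, z i = τ ∧ rho τ z = i + 1 := by
  unfold rho
  split_ifs with hS
  · have hmem := Finset.min'_mem _ hS
    rw [Finset.mem_filter] at hmem
    exact Or.inr ⟨_, hmem.2, rfl⟩
  · exact Or.inl rfl

lemma rho_le_of_forall_lt_rho (h : ∀ j : Fin 6, (j : ℕ) < rho τ z → (w j = τ' ↔ z j = τ)) :
    rho τ' w ≤ rho τ z := by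
  rcases rho_eq_six_or_exists (τ := τ) (z := z) with hsix | ⟨i, hi, hrho⟩
  · exact hsix ▸ rho_le_six
  · exact hrho ▸ rho_le_of_eq ((h i (by omega)).mpr hi)

lemma rho_congr (h : ∀ j : Fin 6, (j : ℕ) < rho τ z → (w j = τ' ↔ z j = τ)) :
    rho τ' w = rho τ z :=
  le_antisymm (rho_le_of_forall_lt_rho h)
    (rho_le_of_forall_lt_rho fun j hj ↦ (h j (hj.trans_le (rho_le_of_forall_lt_rho h))).symm)

end Rho

lemma rho_sub_one_Mdelta {m : ℕ} (τ : ZMod m) (z : Fin 6 → ZMod m) :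
    rho (τ - 1) (Mdelta τ z) = rho τ z :=
  rho_congr fun j hj ↦ by
    simp only [Mdelta, Pi.sub_apply, pvec, if_pos hj, sub_left_inj]

lemma rho_add_pvec_rho_sub_one {m : ℕ} (τ : ZMod m) (y : Fin 6 → ZMod m) :
    rho τ (y + pvec m (rho (τ - 1) y)) = rho (τ - 1) y :=
  rho_congr fun j hj ↦ by
    simp only [Pi.add_apply, pvec, if_pos hj, eq_sub_iff_add_eq]

lemma Mdelta_add_pvec_rho_sub_one {m : ℕ} (τ : ZMod m) (y : Fin 6 → ZMod m) :
    Mdelta τ (y + pvec m (rho (τ - 1) y)) = y := by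
  rw [Mdelta, rho_add_pvec_rho_sub_one, add_sub_cancel_right]

lemma Mdelta_add_pvec_rho_sub_one_Mdelta {m : ℕ} (τ : ZMod m) (z : Fin 6 → ZMod m) :
    Mdelta τ z + pvec m (rho (τ - 1) (Mdelta τ z)) = z := by
  rw [rho_sub_one_Mdelta, Mdelta, sub_add_cancel]

theorem stmt5_general (m : ℕ) (τ : ZMod m) :
    Function.Bijective (Mdelta τ) ∧
      (∀ y : Fin 6 → ZMod m, Mdelta τ (y + pvec m (rho (τ - 1) y)) = y) ∧
      (∀ z : Fin 6 → ZMod m, Mdelta τ z + pvec m (rho (τ - 1) (Mdelta τ z)) = z) :=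
  ⟨Function.bijective_iff_has_inverse.mpr
    ⟨fun y ↦ y + pvec m (rho (τ - 1) y), Mdelta_add_pvec_rho_sub_one_Mdelta τ,
      Mdelta_add_pvec_rho_sub_one τ⟩,
    Mdelta_add_pvec_rho_sub_one τ, Mdelta_add_pvec_rho_sub_one_Mdelta τ⟩

theorem stmt5 (m : ℕ) (hm : 2 ≤ m) (τ : ZMod m) :
    Function.Bijective (Mdelta τ) ∧
      (∀ y : Fin 6 → ZMod m, Mdelta τ (y + pvec m (rho (τ - 1) y)) = y) ∧
      (∀ z : Fin 6 → ZMod m, Mdelta τ z + pvec m (rho (τ - 1) (Mdelta τ z)) = z) :=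
  stmt5_general m τ
end

section
/- Suppose a family of 'layer direction functions' d_t : A_{n,m} × ZZ/n → ZZ/n for t ∈ ZZ/m satisfies: (RF1) for each t and w, κ ↦ d_t(w,κ) is a permutation of ZZ/n; (RF2) for each t and κ, the map P_{t,κ}(w) = w + q_{d_t(w,κ)} is a bijection of A_{n,m}; (RF3) for each κ, the composite R_κ = P_{m−1,κ} ∘ ⋯ ∘ P_{0,κ} is a single cycle on A_{n,m}. Then the arc sets E_κ = {(x, x + e_{d_{σ(x)}(ι_{σ(x)}(x), κ)}) : x ∈ (ZZ/m)^n}, for κ ∈ ZZ/n, partition the arc set of the Cayley digraph Cay((ZZ/m)^n, {e_0,…,e_{n−1}}) into n directed Hamilton cycles. -/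
/-!
The map `x ↦ (σ x, ι_{σ x} x)` embeds `(ℤ/m)^n` into `ℤ/m × A_{n,m}`, and it turns the
colour-`κ` step into the skew product `(t, w) ↦ (t + 1, P_{t,κ} w)`. By (RF2) the step is
therefore injective, hence a permutation of the finite set `(ℤ/m)^n`. Starting on the layer
`σ = 0`, `m` steps come back to that layer and act on it as `R_κ`. Every orbit meets the layer
`σ = 0`, and `R_κ` is transitive on it by (RF3), so the permutation is a single cycle. At a
vertex `x` the colours use the directions `d_{σ x}(ι x, ·)`, which form a permutation by (RF1).
-/

/-- Standard basis vector `e_i` of `(ℤ/m)^n`. -/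
def evec (n m : ℕ) (i : Fin n) : Fin n → ZMod m := fun j => if j = i then 1 else 0

/-- `q_i = e_i − e_{n−1}` for `0 ≤ i ≤ n−2`, and `q_{n−1} = 0`. -/
def qvec (n m : ℕ) (i : Fin n) : Fin n → ZMod m :=
  if (i : ℕ) = n - 1 then 0
  else fun j => (if j = i then 1 else 0) - (if (j : ℕ) = n - 1 then 1 else 0)

/-- The root flat `A_{n,m}`. -/
def RootFlat (n m : ℕ) : Set (Fin n → ZMod m) := {w | ∑ i, w i = 0}

/-- Layer sum `σ(x) = ∑ x_i`. -/
def sigmaSum {n m : ℕ} (x : Fin n → ZMod m) : ZMod m := ∑ i, x i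

/-- `ι_t(x) = x − t·e_{n−1}` applied with `t = σ(x)`. -/
def iotaMap {n m : ℕ} (x : Fin n → ZMod m) : Fin n → ZMod m :=
  fun j => x j - sigmaSum x * (if (j : ℕ) = n - 1 then 1 else 0)

/-- The layer map `P_{t,κ}(w) = w + q_{d_t(w,κ)}`. -/
def layerMap (n m : ℕ) (d : ZMod m → (Fin n → ZMod m) → Fin n → Fin n)
    (t : ZMod m) (κ : Fin n) (w : Fin n → ZMod m) : Fin n → ZMod m :=
  w + qvec n m (d t w κ)

/-- The return map `R_κ = P_{m−1,κ} ∘ ⋯ ∘ P_{0,κ}`. -/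
def returnMap (n m : ℕ) (d : ZMod m → (Fin n → ZMod m) → Fin n → Fin n)
    (κ : Fin n) (w : Fin n → ZMod m) : Fin n → ZMod m :=
  (List.range m).foldl (fun w t => layerMap n m d (t : ZMod m) κ w) w

/-- One step of color `κ` on the Cayley digraph:
`x ↦ x + e_{d_{σ(x)}(ι_{σ(x)} x, κ)}`. -/
def colorStep (n m : ℕ) (d : ZMod m → (Fin n → ZMod m) → Fin n → Fin n)
    (κ : Fin n) (x : Fin n → ZMod m) : Fin n → ZMod m :=
  x + evec n m (d (sigmaSum x) (iotaMap x) κ)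


open Function Set

theorem Set.EqOn.iterate_of_mapsTo {α : Type*} {f g : α → α} {s : Set α} (hf : MapsTo f s s)
    (hfg : EqOn f g s) (k : ℕ) : EqOn f^[k] g^[k] s := by
  induction k with
  | zero => exact fun _ _ => rfl
  | succ k ih =>
    intro x hx
    rw [iterate_succ_apply, iterate_succ_apply, ← hfg hx]
    exact ih (hf hx)

theorem exists_iterate_eq_of_forall_exists_iterate_mem {α : Type*} [Finite α] {f : α → α}
    (hf : Bijective f) {s : Set α} (hreach : ∀ x, ∃ k, f^[k] x ∈ s)
    (htrans : ∀ w ∈ s, ∀ w' ∈ s, ∃ k, f^[k] w = w') (x y : α) : ∃ k, f^[k] x = y := by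
  set e : Equiv.Perm α := Equiv.ofBijective f hf
  have sameCycle_of_iterate {a b : α} : (∃ k, f^[k] a = b) → e.SameCycle a b :=
    fun ⟨k, hk⟩ => ⟨k, by rw [zpow_natCast, Equiv.Perm.coe_pow]; exact hk⟩
  obtain ⟨k, hk⟩ := hreach x
  obtain ⟨l, hl⟩ := hreach y
  have hx : e.SameCycle x (f^[k] x) := sameCycle_of_iterate ⟨k, rfl⟩
  have hy : e.SameCycle y (f^[l] y) := sameCycle_of_iterate ⟨l, rfl⟩
  have hs : e.SameCycle (f^[k] x) (f^[l] y) := sameCycle_of_iterate (htrans _ hk _ hl)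
  exact (hx.trans (hs.trans hy.symm)).exists_nat_pow_eq

section

variable {n m : ℕ}

-- Uniform in `i` because `q_{n-1} = 0 = e_{n-1} - e_{n-1}`.
theorem qvec_eq_evec_sub (i : Fin n) :
    qvec n m i = evec n m i - fun j : Fin n => if (j : ℕ) = n - 1 then (1 : ZMod m) else 0 := by
  funext j
  by_cases hi : (i : ℕ) = n - 1
  · by_cases hj : j = i
    · simp [qvec, evec, hi, hj]
    · have : (j : ℕ) ≠ n - 1 := fun h => hj (Fin.ext (h.trans hi.symm))
      simp [qvec, evec, hi, hj, this]
  · simp [qvec, evec, hi]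

theorem iotaMap_mem_rootFlat (x : Fin n → ZMod m) : iotaMap x ∈ RootFlat n m := by
  cases n with
  | zero => simp [RootFlat]
  | succ k =>
    have hlast : ∀ j : Fin (k + 1), (j : ℕ) = k ↔ j = Fin.last k := by
      simp [Fin.ext_iff]
    simp [RootFlat, iotaMap, Finset.sum_sub_distrib, hlast, sigmaSum]

theorem iotaMap_of_mem_rootFlat {w : Fin n → ZMod m} (hw : w ∈ RootFlat n m) :
    iotaMap w = w := by
  funext j
  simp [iotaMap, show sigmaSum w = 0 from hw]

theorem eq_of_sigmaSum_eq_of_iotaMap_eq {x y : Fin n → ZMod m} (hσ : sigmaSum x = sigmaSum y)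
    (hι : iotaMap x = iotaMap y) : x = y := by
  funext j
  simpa [iotaMap, hσ] using congrFun hι j

theorem sigmaSum_add_evec (x : Fin n → ZMod m) (i : Fin n) :
    sigmaSum (x + evec n m i) = sigmaSum x + 1 := by
  simp [sigmaSum, evec, Finset.sum_add_distrib]

theorem iotaMap_add_evec (x : Fin n → ZMod m) (i : Fin n) :
    iotaMap (x + evec n m i) = iotaMap x + qvec n m i := by
  funext j
  simp only [iotaMap, sigmaSum_add_evec, qvec_eq_evec_sub, Pi.add_apply, Pi.sub_apply]
  ring

variable (d : ZMod m → (Fin n → ZMod m) → Fin n → Fin n) (κ : Fin n)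

theorem sigmaSum_iterate_colorStep (x : Fin n → ZMod m) (k : ℕ) :
    sigmaSum ((colorStep n m d κ)^[k] x) = sigmaSum x + k := by
  induction k with
  | zero => simp
  | succ k ih =>
    rw [iterate_succ_apply', colorStep, sigmaSum_add_evec, ih]
    push_cast
    ring

theorem iotaMap_colorStep (x : Fin n → ZMod m) :
    iotaMap (colorStep n m d κ x) = layerMap n m d (sigmaSum x) κ (iotaMap x) :=
  iotaMap_add_evec x _

theorem iotaMap_iterate_colorStep {w : Fin n → ZMod m} (hw : w ∈ RootFlat n m) (k : ℕ) :
    iotaMap ((colorStep n m d κ)^[k] w)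
      = (List.range k).foldl (fun w t => layerMap n m d (t : ZMod m) κ w) w := by
  induction k with
  | zero => simpa using iotaMap_of_mem_rootFlat hw
  | succ k ih =>
    have hσ : sigmaSum ((colorStep n m d κ)^[k] w) = k := by
      rw [sigmaSum_iterate_colorStep, show sigmaSum w = 0 from hw, zero_add]
    rw [iterate_succ_apply', iotaMap_colorStep, ih, hσ]
    simp [List.range_succ]

theorem mapsTo_iterate_colorStep_rootFlat :
    MapsTo (colorStep n m d κ)^[m] (RootFlat n m) (RootFlat n m) := fun w hw => by
  show sigmaSum _ = 0
  rw [sigmaSum_iterate_colorStep, show sigmaSum w = 0 from hw, ZMod.natCast_self, add_zero]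

theorem iterate_colorStep_eqOn_returnMap :
    EqOn (colorStep n m d κ)^[m] (returnMap n m d κ) (RootFlat n m) := fun w hw => by
  rw [← iotaMap_of_mem_rootFlat (mapsTo_iterate_colorStep_rootFlat d κ hw),
    iotaMap_iterate_colorStep d κ hw, returnMap]

theorem iterate_colorStep_mul {w : Fin n → ZMod m} (hw : w ∈ RootFlat n m) (j : ℕ) :
    (colorStep n m d κ)^[m * j] w = (returnMap n m d κ)^[j] w := by
  rw [iterate_mul]
  exact (iterate_colorStep_eqOn_returnMap d κ).iterate_of_mapsTo
    (mapsTo_iterate_colorStep_rootFlat d κ) j hw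

theorem exists_iterate_colorStep_mem_rootFlat [NeZero m] (x : Fin n → ZMod m) :
    ∃ k, (colorStep n m d κ)^[k] x ∈ RootFlat n m :=
  ⟨(-sigmaSum x).val, by
    show sigmaSum _ = 0
    rw [sigmaSum_iterate_colorStep, ZMod.natCast_zmod_val, add_neg_cancel]⟩

theorem colorStep_injective
    (hP : ∀ t, InjOn (layerMap n m d t κ) (RootFlat n m)) : Injective (colorStep n m d κ) := by
  intro x y hxy
  have hσ : sigmaSum x = sigmaSum y := by
    simpa [colorStep, sigmaSum_add_evec] using congrArg sigmaSum hxy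
  refine eq_of_sigmaSum_eq_of_iotaMap_eq hσ (hP (sigmaSum y) (iotaMap_mem_rootFlat x)
    (iotaMap_mem_rootFlat y) ?_)
  rw [← iotaMap_colorStep, ← hσ, ← iotaMap_colorStep, hxy]

end

theorem stmt10_general (n m : ℕ) (hm : 2 ≤ m)
    (d : ZMod m → (Fin n → ZMod m) → Fin n → Fin n)
    (RF1 : ∀ t : ZMod m, ∀ w ∈ RootFlat n m, Function.Bijective (d t w))
    (RF2 : ∀ t : ZMod m, ∀ κ : Fin n,
      Set.BijOn (layerMap n m d t κ) (RootFlat n m) (RootFlat n m))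
    (RF3 : ∀ κ : Fin n, ∀ w ∈ RootFlat n m, ∀ w' ∈ RootFlat n m,
      ∃ k : ℕ, (returnMap n m d κ)^[k] w = w') :
    -- the color arc sets partition the Cayley arcs: at each vertex the colors
    -- use each of the `n` generator directions exactly once
    (∀ x : Fin n → ZMod m, Function.Bijective fun κ => d (sigmaSum x) (iotaMap x) κ) ∧
    -- and each color class is a directed Hamilton cycle: a spanning
    -- permutation acting transitively on all `m^n` vertices
    (∀ κ : Fin n, Function.Bijective (colorStep n m d κ) ∧
      ∀ x y : Fin n → ZMod m, ∃ k : ℕ, (colorStep n m d κ)^[k] x = y) := by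
  have : NeZero m := ⟨by omega⟩
  refine ⟨fun x => RF1 _ _ (iotaMap_mem_rootFlat x), fun κ => ?_⟩
  have hbij : Bijective (colorStep n m d κ) :=
    Finite.injective_iff_bijective.mp (colorStep_injective d κ fun t => (RF2 t κ).injOn)
  refine ⟨hbij, exists_iterate_eq_of_forall_exists_iterate_mem hbij
    (exists_iterate_colorStep_mem_rootFlat d κ) fun w hw w' hw' => ?_⟩
  obtain ⟨j, hj⟩ := RF3 κ w hw w' hw'
  exact ⟨m * j, (iterate_colorStep_mul d κ hw j).trans hj⟩

theorem stmt10 (n m : ℕ) (hn : 2 ≤ n) (hm : 2 ≤ m)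
    (d : ZMod m → (Fin n → ZMod m) → Fin n → Fin n)
    (RF1 : ∀ t : ZMod m, ∀ w ∈ RootFlat n m, Function.Bijective (d t w))
    (RF2 : ∀ t : ZMod m, ∀ κ : Fin n,
      Set.BijOn (layerMap n m d t κ) (RootFlat n m) (RootFlat n m))
    (RF3 : ∀ κ : Fin n, ∀ w ∈ RootFlat n m, ∀ w' ∈ RootFlat n m,
      ∃ k : ℕ, (returnMap n m d κ)^[k] w = w') :
    -- the color arc sets partition the Cayley arcs: at each vertex the colors
    -- use each of the `n` generator directions exactly once
    (∀ x : Fin n → ZMod m, Function.Bijective fun κ => d (sigmaSum x) (iotaMap x) κ) ∧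
    -- and each color class is a directed Hamilton cycle: a spanning
    -- permutation acting transitively on all `m^n` vertices
    (∀ κ : Fin n, Function.Bijective (colorStep n m d κ) ∧
      ∀ x y : Fin n → ZMod m, ∃ k : ℕ, (colorStep n m d κ)^[k] x = y) :=
  stmt10_general n m hm d RF1 RF2 RF3
end

section
/- Fix m ≥ 2 and a word W of length m in {0, Δ, 2, …, 6} with thresholds τ_0, …, τ_{m−1}, and let R_W be the composite prefix return map on (ZZ/m)^6. The projection of R_W to the first coordinate is the translation y ↦ y − (m − N_0), where N_0 is the number of occurrences of the symbol 0 in W. Consequently, if R_W is a single cycle on (ZZ/m)^6, then gcd(N_0, m) = 1, and in particular N_0 ≥ 1. -/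
/-- The symbol set `{0, Δ, 2, 3, 4, 5, 6}` encoded as `Fin 7`,
with `0 ↦ 0`, `1 ↦ Δ`, and `a ↦ a` for `2 ≤ a ≤ 6`. -/
def Mstep {m : ℕ} (τ : ZMod m) (ξ : Fin 7) (z : Fin 6 → ZMod m) : Fin 6 → ZMod m :=
  if (ξ : ℕ) = 0 then z
  else if (ξ : ℕ) = 1 then Mdelta τ z
  else Mnum τ (ξ : ℕ) z

/-- The return map `R_W = M_{τ_{m−1}}^{ξ_{m−1}} ∘ ⋯ ∘ M_{τ_0}^{ξ_0}`. -/
def returnWord (m : ℕ) (W : ℕ → Fin 7) (τ : ℕ → ZMod m)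
    (z : Fin 6 → ZMod m) : Fin 6 → ZMod m :=
  (List.range m).foldl (fun z t => Mstep (τ t) (W t) z) z

/-- The number of occurrences of symbol `ξ` in the length-`m` word `W`. -/
def symCount (m : ℕ) (W : ℕ → Fin 7) (ξ : Fin 7) : ℕ :=
  ((Finset.range m).filter fun t => W t = ξ).card

/-! Every layer map moves the first coordinate by `0` (symbol `0`) or by `-1` (any other
symbol), so the first coordinate of `R_W` is the translation by `N₀ - m = N₀` in `ℤ/m`.
A single cycle of `R_W` projects onto a single orbit of that translation on `ℤ/m`, which
forces `N₀` to be a unit. -/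

open Function

lemma pvec_apply_zero {m r : ℕ} (hr : 0 < r) : pvec m r 0 = 1 := by
  simp [pvec, hr]

lemma rho_pos {m : ℕ} (τ : ZMod m) (z : Fin 6 → ZMod m) : 0 < rho τ z := by
  unfold rho
  split <;> omega

lemma Mstep_apply_zero {m : ℕ} (τ : ZMod m) (ξ : Fin 7) (z : Fin 6 → ZMod m) :
    Mstep τ ξ z 0 = z 0 - if ξ = 0 then 0 else 1 := by
  unfold Mstep
  by_cases h0 : ξ = 0
  · simp [h0]
  have h0' : (ξ : ℕ) ≠ 0 := Fin.val_ne_iff.mpr h0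
  by_cases h1 : (ξ : ℕ) = 1
  · simp [h0, h1, Mdelta, pvec_apply_zero (rho_pos τ z)]
  · simp only [h0, h0', h1, Mnum, if_false]
    split <;>
      simp [pvec_apply_zero (by omega : 0 < (ξ : ℕ)),
        pvec_apply_zero (by omega : 0 < (ξ : ℕ) - 1)]

lemma foldl_Mstep_apply_zero {m : ℕ} (W : ℕ → Fin 7) (τ : ℕ → ZMod m) (L : List ℕ)
    (z : Fin 6 → ZMod m) :
    (L.foldl (fun z t => Mstep (τ t) (W t) z) z) 0 =
      z 0 - (L.countP (fun t => W t ≠ 0) : ZMod m) := by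
  induction L generalizing z with
  | nil => simp
  | cons t L ih =>
    rw [List.foldl_cons, ih, Mstep_apply_zero, List.countP_cons]
    by_cases h : W t = 0
    · simp [h]
    · simp [h, sub_sub, add_comm]

lemma symCount_add_countP_ne (m : ℕ) (W : ℕ → Fin 7) (ξ : Fin 7) :
    symCount m W ξ + (List.range m).countP (fun t => W t ≠ ξ) = m := by
  have hsym : symCount m W ξ = (List.range m).countP (fun t => W t = ξ) := by
    simp [symCount, Finset.card_def, Finset.filter_val, Multiset.range,
      List.countP_eq_length_filter]
  simpa [hsym] using
    (List.length_eq_countP_add_countP (fun t => decide (W t = ξ)) (l := List.range m)).symm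

lemma returnWord_apply_zero (m : ℕ) (W : ℕ → Fin 7) (τ : ℕ → ZMod m)
    (z : Fin 6 → ZMod m) :
    returnWord m W τ z 0 = z 0 - ((m - symCount m W 0 : ℕ) : ZMod m) := by
  have hcount := symCount_add_countP_ne m W 0
  rw [returnWord, foldl_Mstep_apply_zero]
  congr 2
  omega

lemma natCast_sub_symCount (m : ℕ) (W : ℕ → Fin 7) (ξ : Fin 7) :
    ((m - symCount m W ξ : ℕ) : ZMod m) = -(symCount m W ξ : ZMod m) := by
  rw [Nat.cast_sub (Nat.le.intro (symCount_add_countP_ne m W ξ)), ZMod.natCast_self, zero_sub]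

lemma isUnit_of_semiconj_add_of_forall_exists_iterate_eq {X R : Type*} [CommRing R]
    {f : X → X} {π : X → R} {c : R} (hπ : Semiconj π f (· + c)) (hπs : Surjective π)
    (hf : ∀ x y, ∃ j, f^[j] x = y) : IsUnit c := by
  obtain ⟨x, hx⟩ := hπs 0
  obtain ⟨y, hy⟩ := hπs 1
  obtain ⟨j, rfl⟩ := hf x y
  have h := hπ.iterate_right j x
  simp only [add_right_iterate, hx, hy, zero_add, nsmul_eq_mul] at h
  exact IsUnit.of_mul_eq_one_right _ h.symm

theorem stmt17 (m : ℕ) (hm : 2 ≤ m) (W : ℕ → Fin 7) (τ : ℕ → ZMod m) :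
    (∀ z : Fin 6 → ZMod m,
        returnWord m W τ z 0 = z 0 - ((m - symCount m W 0 : ℕ) : ZMod m)) ∧
      ((∀ z z' : Fin 6 → ZMod m, ∃ j : ℕ, (returnWord m W τ)^[j] z = z') →
        Nat.gcd (symCount m W 0) m = 1 ∧ 1 ≤ symCount m W 0) := by
  refine ⟨returnWord_apply_zero m W τ, fun htrans => ?_⟩
  have hsemiconj : Semiconj (fun z : Fin 6 → ZMod m => z 0) (returnWord m W τ)
      (· + (symCount m W 0 : ZMod m)) := fun z => by
    show returnWord m W τ z 0 = z 0 + _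
    rw [returnWord_apply_zero, natCast_sub_symCount, sub_neg_eq_add]
  have hcop : Nat.Coprime (symCount m W 0) m :=
    (ZMod.isUnit_iff_coprime _ m).mp <|
      isUnit_of_semiconj_add_of_forall_exists_iterate_eq hsemiconj
        (fun a => ⟨fun _ => a, rfl⟩) htrans
  refine ⟨hcop, Nat.pos_of_ne_zero fun h0 => ?_⟩
  rw [h0, Nat.coprime_zero_left] at hcop
  omega
end

section
/- Let m ≥ 2 and fix any τ ∈ ZZ/m and any 2 ≤ a ≤ 6. For y ∈ (ZZ/m)^6, define z by z_i = y_i + 1 for i < a; z_a = y_a + 1 if some coordinate among y_1, …, y_{a−1} equals τ − 1, and z_a = y_a otherwise; and z_i = y_i for i > a. Then M_τ^a(z) = y, and this z is the unique preimage of y under M_τ^a. -/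
/-- The explicit preimage: `z_i = y_i + 1` for `i < a`; `z_a = y_a + 1` if some
coordinate among `y_1, …, y_{a−1}` equals `τ − 1`, else `z_a = y_a`; `z_i = y_i`
for `i > a`.  (`Fin 6` index `i₀` corresponds to coordinate `i₀ + 1`.) -/
def zOf {m : ℕ} (τ : ZMod m) (a : ℕ) (y : Fin 6 → ZMod m) : Fin 6 → ZMod m :=
  fun i =>
    if (i : ℕ) + 1 < a then y i + 1
    else if (i : ℕ) + 1 = a then
      (if ∃ j : Fin 6, (j : ℕ) + 1 < a ∧ y j = τ - 1 then y i + 1 else y i)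
    else y i


variable {m : ℕ}

lemma rho_lt_iff {τ : ZMod m} {z : Fin 6 → ZMod m} {a : ℕ} (ha : a ≤ 6) :
    rho τ z < a ↔ ∃ i : Fin 6, (i : ℕ) + 1 < a ∧ z i = τ := by
  unfold rho
  split_ifs with h
  · set s := Finset.univ.filter fun i : Fin 6 => z i = τ
    constructor
    · exact fun hlt => ⟨s.min' h, hlt, (Finset.mem_filter.1 (s.min'_mem h)).2⟩
    · rintro ⟨i, hi, rfl⟩
      have hmin : s.min' h ≤ i := s.min'_le i (by simp [s])
      exact lt_of_le_of_lt (Nat.succ_le_succ hmin) hi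
  · simp only [Finset.not_nonempty_iff_eq_empty, Finset.filter_eq_empty_iff] at h
    exact iff_of_false (by omega) fun ⟨i, _, hi⟩ => h (Finset.mem_univ i) hi

def mnumIndex (τ : ZMod m) (a : ℕ) (z : Fin 6 → ZMod m) : ℕ :=
  if ∃ i : Fin 6, (i : ℕ) + 1 < a ∧ z i = τ then a else a - 1

lemma le_mnumIndex (τ : ZMod m) (a : ℕ) (z : Fin 6 → ZMod m) : a - 1 ≤ mnumIndex τ a z := by
  unfold mnumIndex
  split_ifs <;> omega

lemma Mnum_eq_sub_pvec (τ : ZMod m) {a : ℕ} (ha : a ≤ 6) (z : Fin 6 → ZMod m) :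
    Mnum τ a z = z - pvec m (mnumIndex τ a z) := by
  unfold Mnum mnumIndex
  by_cases h : ∃ i : Fin 6, (i : ℕ) + 1 < a ∧ z i = τ
  · rw [if_pos ((rho_lt_iff ha).2 h), if_pos h]
  · rw [if_neg (mt (rho_lt_iff ha).1 h), if_neg h]

lemma zOf_eq_add_pvec (τ : ZMod m) (a : ℕ) (y : Fin 6 → ZMod m) :
    zOf τ a y = y + pvec m (mnumIndex (τ - 1) a y) := by
  funext i
  simp only [zOf, mnumIndex, pvec, Pi.add_apply]
  split_ifs <;> first | omega | simp

lemma mnumIndex_add_pvec (τ : ZMod m) {a r : ℕ} (y : Fin 6 → ZMod m) (hr : a - 1 ≤ r) :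
    mnumIndex τ a (y + pvec m r) = mnumIndex (τ - 1) a y := by
  have hcoord : ∀ i : Fin 6, (i : ℕ) + 1 < a → ((y + pvec m r) i = τ ↔ y i = τ - 1) :=
    fun i hi => by rw [Pi.add_apply, pvec, if_pos (by omega), eq_sub_iff_add_eq]
  unfold mnumIndex
  exact if_congr (exists_congr fun i => and_congr_right (hcoord i)) rfl rfl

theorem stmt19_general (m : ℕ) (τ : ZMod m) (a : ℕ) (ha6 : a ≤ 6)
    (y : Fin 6 → ZMod m) :
    Mnum τ a (zOf τ a y) = y ∧ ∀ z : Fin 6 → ZMod m, Mnum τ a z = y → z = zOf τ a y := by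
  refine ⟨?_, fun z hz => ?_⟩
  · rw [zOf_eq_add_pvec, Mnum_eq_sub_pvec τ ha6,
      mnumIndex_add_pvec τ y (le_mnumIndex _ _ _), add_sub_cancel_right]
  · rw [Mnum_eq_sub_pvec τ ha6, sub_eq_iff_eq_add] at hz
    have hidx : mnumIndex τ a z = mnumIndex (τ - 1) a y := by
      conv_lhs => rw [hz]
      exact mnumIndex_add_pvec τ y (le_mnumIndex τ a z)
    rw [zOf_eq_add_pvec, ← hidx]
    exact hz

theorem stmt19 (m : ℕ) (hm : 2 ≤ m) (τ : ZMod m) (a : ℕ) (ha2 : 2 ≤ a) (ha6 : a ≤ 6)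
    (y : Fin 6 → ZMod m) :
    Mnum τ a (zOf τ a y) = y ∧ ∀ z : Fin 6 → ZMod m, Mnum τ a z = y → z = zOf τ a y :=
  stmt19_general m τ a ha6 y
end
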